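/- Let A be a commutative ring with no nontrivial idempotents and a a unit of the Laurent series ring A((t)). Then there exist an integer n, a unit a₀ of A, a formal power series f ∈ A[[t]] with constant coefficient 1, and a Laurent series g ∈ A((t)) whose coefficient in degree 0 equals 1, whose coefficient in every positive degree equals 0, and whose coefficient in every negative degree is nilpotent, such that a = t^n · a₀ · f · g in A((t)). -/

import Mathlib

/-!
For a prime `p` of `A`, the image of `a` in `(A ⧸ p)((t))` is a unit over a domain, so its
order `ord_p a` satisfies `ord_p a + ord_p a⁻¹ = 0`. As `{p | ord_p a ≤ m}` is a union of basic
opens, `p ↦ ord_p a` is locally constant, hence constant, equal to `n`, on `Spec A`, which is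
connected because `A` has no nontrivial idempotents. So the coefficients of `a` below `n` lie in
every prime and are nilpotent, while `a_n` lies in no prime and is a unit.

After dividing by `t ^ n`, the negative coefficients generate a nilpotent ideal `J`, and
dividing by the nonnegative part gives `u ≡ 1 mod J`. Splitting `u - 1 = ε₊ + ε₋` into
nonnegative and negative parts, `u = (1 + ε₊)(1 + ε₋) - ε₊ε₋` with both factors units, so
dividing them off leaves `u' ≡ 1 mod J²`. Iterating until `J ^ 2 ^ k = 0` gives the
factorization.
-/

open HahnSeries LaurentSeries

theorem Ideal.le_nilradical_of_isNilpotent {R : Type*} [CommSemiring R] {I : Ideal R}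
    (hI : IsNilpotent I) : I ≤ nilradical R := fun x hx => by
  obtain ⟨n, hn⟩ := hI
  exact ⟨n, by simpa [hn] using Ideal.pow_mem_pow hx n⟩

theorem PrimeSpectrum.preconnectedSpace_of_isIdempotentElem {R : Type*} [CommRing R]
    (hR : ∀ e : R, IsIdempotentElem e → e = 0 ∨ e = 1) :
    PreconnectedSpace (PrimeSpectrum R) :=
  preconnectedSpace_iff_clopen.mpr fun s hs => by
    obtain ⟨e, he, rfl⟩ := PrimeSpectrum.exists_idempotent_basicOpen_eq_of_isClopen hs
    rcases hR e he with rfl | rfl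
    · simp [PrimeSpectrum.basicOpen_zero]
    · simp [PrimeSpectrum.basicOpen_one]

namespace HahnSeries

variable {Γ R : Type*} [AddCommMonoid Γ] [PartialOrder Γ] [IsOrderedCancelAddMonoid Γ]
  [CommSemiring R]

def coeffIdeal (I : Ideal R) : Ideal (HahnSeries Γ R) where
  carrier := {x | ∀ i, x.coeff i ∈ I}
  add_mem' hx hy i := by simpa using I.add_mem (hx i) (hy i)
  zero_mem' i := by simp
  smul_mem' c x hx i := by
    rw [smul_eq_mul, coeff_mul]
    exact I.sum_mem fun _ _ => I.mul_mem_left _ (hx _)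

theorem mem_coeffIdeal {I : Ideal R} {x : HahnSeries Γ R} :
    x ∈ coeffIdeal I ↔ ∀ i, x.coeff i ∈ I := Iff.rfl

theorem coeffIdeal_bot : coeffIdeal (⊥ : Ideal R) = (⊥ : Ideal (HahnSeries Γ R)) := by
  ext x
  simp [mem_coeffIdeal, HahnSeries.ext_iff, funext_iff]

theorem coeffIdeal_mul_le (I J : Ideal R) :
    coeffIdeal I * coeffIdeal J ≤ (coeffIdeal (I * J) : Ideal (HahnSeries Γ R)) :=
  Ideal.mul_le.mpr fun x hx y hy i => by
    rw [coeff_mul]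
    exact Ideal.sum_mem _ fun _ _ => Ideal.mul_mem_mul (hx _) (hy _)

theorem coeffIdeal_pow_le (I : Ideal R) (n : ℕ) :
    coeffIdeal I ^ n ≤ (coeffIdeal (I ^ n) : Ideal (HahnSeries Γ R)) := by
  induction n with
  | zero => exact fun x _ i => by simp
  | succ n ih =>
    rw [pow_succ, pow_succ]
    exact (Ideal.mul_mono_left ih).trans (coeffIdeal_mul_le _ _)

theorem isNilpotent_coeffIdeal {I : Ideal R} (hI : IsNilpotent I) :
    IsNilpotent (coeffIdeal I : Ideal (HahnSeries Γ R)) := by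
  obtain ⟨n, hn⟩ := hI
  exact ⟨n, le_bot_iff.mp
    (by simpa [hn, coeffIdeal_bot] using coeffIdeal_pow_le (Γ := Γ) I n)⟩

theorem truncLT_mem_coeffIdeal [DecidableLT Γ] {I : Ideal R} {x : HahnSeries Γ R} (c : Γ)
    (hx : x ∈ coeffIdeal I) : truncLT c x ∈ coeffIdeal I := fun i => by
  rw [HahnSeries.coeff_truncLT]
  split_ifs
  exacts [hx i, I.zero_mem]

end HahnSeries

namespace LaurentSeries

section Semiring

variable {R : Type*}

def nonnegPart [Zero R] (x : LaurentSeries R) : PowerSeries R :=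
  PowerSeries.mk fun n => x.coeff n

theorem constantCoeff_nonnegPart [Semiring R] (x : LaurentSeries R) :
    PowerSeries.constantCoeff x.nonnegPart = x.coeff 0 := by
  simp [nonnegPart]

theorem coe_nonnegPart_add_truncLT [Semiring R] (x : LaurentSeries R) :
    (x.nonnegPart : LaurentSeries R) + truncLT 0 x = x := by
  ext i
  rw [coeff_add, PowerSeries.coeff_coe, HahnSeries.coeff_truncLT]
  split_ifs with hi
  · simp
  · simp [nonnegPart, Int.natAbs_of_nonneg (not_lt.mp hi)]

end Semiring

variable {R : Type*} [CommRing R]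

noncomputable def orderAt (x : LaurentSeries R) (p : PrimeSpectrum R) : ℤ :=
  (x.map (Ideal.Quotient.mk p.asIdeal)).order

theorem coeff_mem_of_lt_orderAt {x : LaurentSeries R} {p : PrimeSpectrum R} {i : ℤ}
    (hi : i < x.orderAt p) : x.coeff i ∈ p.asIdeal :=
  Ideal.Quotient.eq_zero_iff_mem.mp (coeff_eq_zero_of_lt_order hi)

theorem map_mk_mul_map_mk_inv (a : (LaurentSeries R)ˣ) (p : PrimeSpectrum R) :
    (a : LaurentSeries R).map (Ideal.Quotient.mk p.asIdeal) *
      (↑a⁻¹ : LaurentSeries R).map (Ideal.Quotient.mk p.asIdeal) = 1 := by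
  refine (HahnSeries.map_mul (Ideal.Quotient.mk p.asIdeal).toNonUnitalRingHom).symm.trans ?_
  rw [Units.mul_inv]
  exact HahnSeries.map_one (Ideal.Quotient.mk p.asIdeal).toMonoidWithZeroHom

theorem coeff_orderAt_notMem (a : (LaurentSeries R)ˣ) (p : PrimeSpectrum R) :
    (a : LaurentSeries R).coeff ((a : LaurentSeries R).orderAt p) ∉ p.asIdeal := by
  rw [← Ideal.Quotient.eq_zero_iff_mem]
  exact fun h => left_ne_zero_of_mul_eq_one (map_mk_mul_map_mk_inv a p)
    (coeff_order_eq_zero.mp h)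

theorem orderAt_add_orderAt_inv (a : (LaurentSeries R)ˣ) (p : PrimeSpectrum R) :
    (a : LaurentSeries R).orderAt p + (↑a⁻¹ : LaurentSeries R).orderAt p = 0 := by
  have h := map_mk_mul_map_mk_inv a p
  rw [orderAt, orderAt, ← order_mul (left_ne_zero_of_mul_eq_one h)
    (right_ne_zero_of_mul_eq_one h), h, order_one]

theorem isOpen_setOf_orderAt_le (a : (LaurentSeries R)ˣ) (m : ℤ) :
    IsOpen {p | (a : LaurentSeries R).orderAt p ≤ m} := by
  have : {p | (a : LaurentSeries R).orderAt p ≤ m} =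
      ⋃ i ≤ m, (PrimeSpectrum.basicOpen ((a : LaurentSeries R).coeff i) : Set _) := by
    ext p
    simp only [Set.mem_ofPred_eq, Set.mem_iUnion, SetLike.mem_coe, PrimeSpectrum.mem_basicOpen]
    refine ⟨fun h => ⟨_, h, coeff_orderAt_notMem a p⟩, fun ⟨i, hi, hp⟩ => ?_⟩
    exact (not_lt.mp fun hlt => hp (coeff_mem_of_lt_orderAt hlt)).trans hi
  rw [this]
  exact isOpen_biUnion fun i _ => (PrimeSpectrum.basicOpen _).isOpen

theorem isLocallyConstant_orderAt (a : (LaurentSeries R)ˣ) :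
    IsLocallyConstant (orderAt (a : LaurentSeries R)) := by
  refine IsLocallyConstant.iff_isOpen_fiber.mpr fun m => ?_
  have : orderAt (a : LaurentSeries R) ⁻¹' {m} = {p | (a : LaurentSeries R).orderAt p ≤ m} ∩
      {p | (↑a⁻¹ : LaurentSeries R).orderAt p ≤ -m} := by
    ext p
    have := orderAt_add_orderAt_inv a p
    simp only [Set.mem_preimage, Set.mem_singleton_iff, Set.mem_inter_iff, Set.mem_ofPred_eq]
    omega
  rw [this]
  exact (isOpen_setOf_orderAt_le a m).inter (isOpen_setOf_orderAt_le a⁻¹ (-m))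

theorem exists_isUnit_coeff_of_preconnectedSpace [Nontrivial R]
    [PreconnectedSpace (PrimeSpectrum R)] (a : (LaurentSeries R)ˣ) :
    ∃ n : ℤ, (∀ i < n, IsNilpotent ((a : LaurentSeries R).coeff i)) ∧
      IsUnit ((a : LaurentSeries R).coeff n) := by
  obtain ⟨p₀⟩ : Nonempty (PrimeSpectrum R) := inferInstance
  have hconst p : (a : LaurentSeries R).orderAt p = (a : LaurentSeries R).orderAt p₀ :=
    (isLocallyConstant_orderAt a).apply_eq_of_preconnectedSpace p p₀
  refine ⟨(a : LaurentSeries R).orderAt p₀, fun i hi => nilpotent_iff_mem_prime.mpr fun J hJ =>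
    coeff_mem_of_lt_orderAt (p := ⟨J, hJ⟩) (hconst ⟨J, hJ⟩ ▸ hi), ?_⟩
  by_contra hu
  obtain ⟨M, hM, hmem⟩ := exists_max_ideal_of_mem_nonunits hu
  exact coeff_orderAt_notMem a ⟨M, hM.isPrime⟩ (hconst ⟨M, hM.isPrime⟩ ▸ hmem)

def negUnipotent (R : Type*) [CommRing R] : Submonoid (LaurentSeries R) where
  carrier := {g | g - 1 ∈ coeffIdeal (nilradical R) ∧ (g - 1).support ⊆ Set.Iio 0}
  one_mem' := by simp
  mul_mem' := by
    rintro g h ⟨hg, hg'⟩ ⟨hh, hh'⟩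
    have : g * h - 1 = (g - 1) + (h - 1) + (g - 1) * (h - 1) := by ring
    refine ⟨this ▸ add_mem (add_mem hg hh) (Ideal.mul_mem_left _ _ hh), this ▸ ?_⟩
    refine (support_add_subset _ _).trans (Set.union_subset
      ((support_add_subset _ _).trans (Set.union_subset hg' hh')) (support_mul_subset.trans ?_))
    rintro _ ⟨i, hi, j, hj, rfl⟩
    exact show i + j < 0 from add_neg (hg' hi) (hh' hj)

theorem mem_negUnipotent {g : LaurentSeries R} :
    g ∈ negUnipotent R ↔ g.coeff 0 = 1 ∧ (∀ i, 0 < i → g.coeff i = 0) ∧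
      ∀ i < 0, IsNilpotent (g.coeff i) := by
  simp only [negUnipotent, Submonoid.mem_mk, Subsemigroup.mem_mk, Set.mem_ofPred_eq,
    mem_coeffIdeal, mem_nilradical, Set.subset_def, mem_support, Set.mem_Iio, coeff_sub,
    coeff_one]
  constructor
  · rintro ⟨hnil, hsupp⟩
    have hnonneg (i : ℤ) (hi : 0 ≤ i) := not_not.mp (mt (hsupp i) (not_lt.mpr hi))
    exact ⟨by simpa [sub_eq_zero] using hnonneg 0 le_rfl,
      fun i hi => by simpa [hi.ne'] using hnonneg i hi.le,
      fun i hi => by simpa [hi.ne] using hnil i⟩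
  · rintro ⟨h0, hpos, hneg⟩
    refine ⟨fun i => ?_, fun i hi => ?_⟩
    · rcases lt_trichotomy i 0 with hi | rfl | hi
      · simpa [hi.ne] using hneg i hi
      · simp [h0]
      · simp [hi.ne', hpos i hi]
    · by_contra hi'
      rcases (not_lt.mp hi').lt_or_eq with hi' | rfl
      · simp [hi'.ne', hpos _ hi'] at hi
      · simp [h0] at hi

theorem exists_eq_coe_mul_mul_of_sub_one_mem {J : Ideal R} (hJ : IsNilpotent J)
    {u : LaurentSeries R} (hu : u - 1 ∈ coeffIdeal J) :
    ∃ f : PowerSeries R, IsUnit f ∧ ∃ g ∈ negUnipotent R, ∃ u' : LaurentSeries R,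
      u' - 1 ∈ coeffIdeal (J ^ 2) ∧ u = f * u' * g := by
  have hJnil := Ideal.le_nilradical_of_isNilpotent hJ
  set ν := truncLT 0 (u - 1)
  have hν : ν ∈ coeffIdeal J := truncLT_mem_coeffIdeal 0 hu
  set f : PowerSeries R := 1 + (u - 1).nonnegPart
  have hf : IsUnit f := by
    refine PowerSeries.isUnit_iff_constantCoeff.mpr ?_
    simpa [f, constantCoeff_nonnegPart] using (mem_nilradical.mp (hJnil (hu 0))).isUnit_one_add
  have hg : IsUnit (1 + ν) := (mem_nilradical.mp
    (Ideal.le_nilradical_of_isNilpotent (isNilpotent_coeffIdeal hJ) hν)).isUnit_one_add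
  have hF : (f : LaurentSeries R) - 1 = u - 1 - ν := by
    simp only [f, map_add, map_one]
    linear_combination coe_nonnegPart_add_truncLT (u - 1)
  -- `u = f (1 + ν) - (f - 1) ν`, and the error term has coefficients in `J ^ 2`
  have hsq : ((f : LaurentSeries R) - 1) * ν ∈ coeffIdeal (J ^ 2) :=
    sq J ▸ coeffIdeal_mul_le J J (Ideal.mul_mem_mul (hF ▸ sub_mem hu hν) hν)
  have hFu := hf.map (HahnSeries.ofPowerSeries ℤ R)
  have hFinv := hFu.val_inv_mul
  have hginv := hg.mul_val_inv
  refine ⟨f, hf, 1 + ν, ⟨?_, ?_⟩, ↑hFu.unit⁻¹ * u * ↑hg.unit⁻¹, ?_, ?_⟩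
  · simpa using (show ν ∈ coeffIdeal (nilradical R) from fun i => hJnil (hν i))
  · rw [add_sub_cancel_left, support_truncLT]
    exact fun i hi => hi.2
  · have : ↑hFu.unit⁻¹ * u * ↑hg.unit⁻¹ - 1 =
        -(↑hFu.unit⁻¹ * ↑hg.unit⁻¹) * (((f : LaurentSeries R) - 1) * ν) := by
      linear_combination (↑hg.unit⁻¹ * (1 + ν)) * hFinv + hginv -
        (↑hFu.unit⁻¹ * ↑hg.unit⁻¹) * hF
    rw [this]
    exact Ideal.mul_mem_left _ _ hsq
  · linear_combination (-u * ↑hg.unit⁻¹ * (1 + ν)) * hFinv - u * hginv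

theorem exists_eq_coe_mul_of_sub_one_mem {J : Ideal R} (hJ : IsNilpotent J)
    {u : LaurentSeries R} (hu : u - 1 ∈ coeffIdeal J) :
    ∃ f : PowerSeries R, IsUnit f ∧ ∃ g ∈ negUnipotent R, u = f * g := by
  obtain ⟨d, hd⟩ := hJ
  replace hd : J ^ 2 ^ d = ⊥ := pow_eq_zero_of_le Nat.lt_two_pow_self.le hd
  induction d generalizing J u with
  | zero =>
    rw [pow_zero, pow_one] at hd
    rw [hd, coeffIdeal_bot, Ideal.mem_bot, sub_eq_zero] at hu
    exact ⟨1, isUnit_one, 1, one_mem _, by simp [hu]⟩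
  | succ d ih =>
    obtain ⟨f, hf, g, hg, u', hu', rfl⟩ := exists_eq_coe_mul_mul_of_sub_one_mem ⟨_, hd⟩ hu
    obtain ⟨f', hf', g', hg', rfl⟩ := ih hu' (by rwa [← pow_mul, ← pow_succ'])
    exact ⟨f * f', hf.mul hf', g' * g, mul_mem hg' hg, by rw [map_mul]; ring⟩

theorem exists_eq_coe_mul_of_isNilpotent_coeff {h : LaurentSeries R}
    (hneg : ∀ i < 0, IsNilpotent (h.coeff i)) (h0 : IsUnit (h.coeff 0)) :
    ∃ f : PowerSeries R, IsUnit f ∧ ∃ g ∈ negUnipotent R, h = f * g := by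
  set J := Ideal.span (h.coeff '' Set.Ico h.order 0)
  have hJ : IsNilpotent J := by
    refine (Ideal.FG.isNilpotent_iff_le_nilradical
      (Submodule.fg_span ((Set.finite_Ico _ _).image _))).mpr (Ideal.span_le.mpr ?_)
    rintro _ ⟨i, hi, rfl⟩
    exact hneg i hi.2
  have htrunc : truncLT 0 h ∈ coeffIdeal J := fun i => by
    rw [HahnSeries.coeff_truncLT]
    split_ifs with hi
    · rcases lt_or_ge i h.order with hlt | hge
      · rw [coeff_eq_zero_of_lt_order hlt]
        exact J.zero_mem
      · exact Ideal.subset_span ⟨i, ⟨hge, hi⟩, rfl⟩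
    · exact J.zero_mem
  have hP₀ : IsUnit h.nonnegPart :=
    PowerSeries.isUnit_iff_constantCoeff.mpr (constantCoeff_nonnegPart h ▸ h0)
  have hP := hP₀.map (HahnSeries.ofPowerSeries ℤ R)
  have hPinv := hP.val_inv_mul
  have hu : ↑hP.unit⁻¹ * h - 1 ∈ coeffIdeal J := by
    have : ↑hP.unit⁻¹ * h - 1 = ↑hP.unit⁻¹ * truncLT 0 h := by
      linear_combination hPinv - ↑hP.unit⁻¹ * coe_nonnegPart_add_truncLT h
    exact this ▸ Ideal.mul_mem_left _ _ htrunc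
  obtain ⟨f, hf, g, hg, hfg⟩ := exists_eq_coe_mul_of_sub_one_mem hJ hu
  refine ⟨h.nonnegPart * f, hP₀.mul hf, g, hg, ?_⟩
  rw [map_mul, mul_assoc, ← hfg]
  linear_combination (-h) * hPinv

end LaurentSeries

/-- The factorization underlying Corollary 4.3.5: over a commutative ring with no
nontrivial idempotents, every unit `a` of `A((t))` factors as
`a = t^n · a₀ · f · g` where `a₀ ∈ Aˣ`, `f ∈ A[[t]]` has constant coefficient `1`,
and `g` has coefficient `1` in degree `0`, vanishing coefficients in positive degrees
and nilpotent coefficients in negative degrees. -/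
theorem laurent_unit_factorization (A : Type*) [CommRing A]
    (hA : ∀ e : A, IsIdempotentElem e → e = 0 ∨ e = 1)
    (a : (LaurentSeries A)ˣ) :
    ∃ (n : ℤ) (a₀ : Aˣ) (f : PowerSeries A) (g : LaurentSeries A),
      PowerSeries.constantCoeff f = 1 ∧
      g.coeff 0 = 1 ∧
      (∀ i : ℤ, 0 < i → g.coeff i = 0) ∧
      (∀ i : ℤ, i < 0 → IsNilpotent (g.coeff i)) ∧
      (a : LaurentSeries A) =
        HahnSeries.single n (1 : A) * HahnSeries.C (a₀ : A) *
          HahnSeries.ofPowerSeries ℤ A f * g := by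
  rcases subsingleton_or_nontrivial A with _ | _
  · exact ⟨0, 1, 1, 1, Subsingleton.elim _ _, Subsingleton.elim _ _,
      fun _ _ => Subsingleton.elim _ _, fun _ _ => ⟨1, Subsingleton.elim _ _⟩,
      Subsingleton.elim _ _⟩
  have := PrimeSpectrum.preconnectedSpace_of_isIdempotentElem hA
  obtain ⟨n, hneg, hn⟩ := exists_isUnit_coeff_of_preconnectedSpace a
  set x : LaurentSeries A := ↑a
  have hcoeff (i : ℤ) : (single (-n) 1 * x).coeff i = x.coeff (i + n) := by
    simpa using coeff_single_mul_add (a := i + n) (b := -n) (r := (1 : A)) (x := x)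
  obtain ⟨f, hf, g, hg, hfg⟩ := exists_eq_coe_mul_of_isNilpotent_coeff
    (fun i hi => hcoeff i ▸ hneg _ (by omega)) (by rw [hcoeff, zero_add]; exact hn)
  obtain ⟨c, hc⟩ := PowerSeries.isUnit_iff_constantCoeff.mp hf
  obtain ⟨hg0, hgpos, hgneg⟩ := mem_negUnipotent.mp hg
  refine ⟨n, c, PowerSeries.C (↑c⁻¹ : A) * f, g, by simp [← hc], hg0, hgpos, hgneg, ?_⟩
  have hC : (C (c : A) * C (↑c⁻¹ : A) : LaurentSeries A) = 1 := by
    rw [← map_mul, Units.mul_inv, map_one]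
  calc x = single n 1 * (single (-n) 1 * x) := by
        rw [← mul_assoc, single_mul_single, add_neg_cancel, one_mul, single_zero_one, one_mul]
    _ = _ := by
        rw [hfg, map_mul, ofPowerSeries_C]
        linear_combination (-(single n 1 * ofPowerSeries ℤ A f * g)) * hC
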